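/- Let 𝔥 : ℝ² → ℝ be continuous, positively 1-homogeneous, symmetric (𝔥(−v) = 𝔥(v) for all v), with 𝔥(ν) > 0 for ν ≠ 0, continuously differentiable on ℝ² \ {0}, and strictly convex in the sense that 𝔥(tν + (1−t)μ) < t·𝔥(ν) + (1−t)·𝔥(μ) for every t ∈ (0,1) and all vectors ν, μ which are not positively parallel. Then for every point A with 𝔥(A) = 1 there exists exactly one unordered pair {B, C} of points with 𝔥(B) = 𝔥(C) = 1 such that ∇𝔥(A) + ∇𝔥(B) + ∇𝔥(C) = 0; that is, such a pair B, C exists, and whenever B', C' satisfy 𝔥(B') = 𝔥(C') = 1 and ∇𝔥(A) + ∇𝔥(B') + ∇𝔥(C') = 0, one has {B', C'} = {B, C}. -/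

import Mathlib

/-!
The gradient map `v ↦ ∇𝔥 v` is a bijection from the unit sphere `{𝔥 = 1}` onto the unit sphere
`{N = 1}` of the support function `N x = sup_{𝔥 u = 1} ⟪x, u⟫`. Indeed, Euler's identity
`⟪∇𝔥 v, v⟫ = 𝔥 v` and convexity give `N (∇𝔥 v) = 1`; a point `w` where `⟪x, ·⟫` attains `N x = 1`
on `{𝔥 = 1}` is a minimum of `𝔥 - ⟪x, ·⟫`, so `∇𝔥 w = x`; and strict convexity of `𝔥` off rays
makes `∇𝔥` injective on `{𝔥 = 1}`. The same support-point argument shows, using only the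
differentiability of `𝔥`, that the unit ball of `N` is strictly convex.

So the theorem asks to write `s = -∇𝔥 A` as `q + r` with `N q = N r = 1`, uniquely up to order.
Existence is the intermediate value theorem for `N (s - ·)` on the connected curve `{N = 1}`.
For uniqueness, the admissible `q` are the common points of `{N = 1}` and its translate by `s`.
Slice the plane by lines parallel to `s`: by strict convexity a slice through a common point `x`
contains no other point of `{N ≤ 1} ∩ ({N ≤ 1} + s)`. If three common points existed, the
middle slice would meet the chord joining the outer two in such a point.
-/

open Set Filter InnerProductSpace Module Metric
open scoped RealInnerProductSpace Pointwise

section VectorSpace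

variable {V : Type*} [AddCommGroup V] [Module ℝ V]

def PosHomogeneous (f : V → ℝ) : Prop :=
  ∀ c : ℝ, 0 ≤ c → ∀ v, f (c • v) = c * f v

def StrictConvexOffRays (f : V → ℝ) : Prop :=
  ∀ t ∈ Ioo (0 : ℝ) 1, ∀ ν μ : V, ¬ SameRay ℝ ν μ →
    f (t • ν + (1 - t) • μ) < t * f ν + (1 - t) * f μ

def StrictConvexUnitBall (N : V → ℝ) : Prop :=
  ∀ ⦃x y : V⦄, N x ≤ 1 → N y ≤ 1 → x ≠ y → ∀ z ∈ openSegment ℝ x y, N z < 1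

theorem sameRay_iff_exists_nonneg_smul {ν μ : V} :
    SameRay ℝ ν μ ↔ (∃ l : ℝ, 0 ≤ l ∧ ν = l • μ) ∨ ∃ l : ℝ, 0 ≤ l ∧ μ = l • ν := by
  refine ⟨fun h => ?_, ?_⟩
  · rcases eq_or_ne μ 0 with rfl | hμ
    · exact Or.inr ⟨0, le_rfl, by simp⟩
    · exact Or.inl (h.exists_nonneg_right hμ)
  · rintro (⟨l, hl, rfl⟩ | ⟨l, hl, rfl⟩)
    · exact SameRay.sameRay_nonneg_smul_left μ hl
    · exact SameRay.sameRay_nonneg_smul_right ν hl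

namespace PosHomogeneous

variable {f : V → ℝ}

theorem map_zero (hf : PosHomogeneous f) : f 0 = 0 := by
  simpa using hf 0 le_rfl 0

theorem ne_zero_of_map_eq_one (hf : PosHomogeneous f) {v : V} (hv : f v = 1) : v ≠ 0 := by
  rintro rfl
  simp [hf.map_zero] at hv

theorem map_inv_smul_self (hf : PosHomogeneous f) {v : V} (hv : 0 < f v) :
    f ((f v)⁻¹ • v) = 1 := by
  rw [hf _ (inv_nonneg.2 hv.le), inv_mul_cancel₀ hv.ne']

theorem map_add_of_sameRay (hf : PosHomogeneous f) {ν μ : V} (h : SameRay ℝ ν μ) {a b : ℝ}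
    (ha : 0 ≤ a) (hb : 0 ≤ b) : f (a • ν + b • μ) = a * f ν + b * f μ := by
  obtain ⟨u, α, β, hα, hβ, -, rfl, rfl⟩ := h.exists_eq_smul
  rw [smul_smul, smul_smul, ← add_smul, hf _ (by positivity), hf α hα, hf β hβ]
  ring

theorem eq_of_sameRay (hf : PosHomogeneous f) {v w : V} (h : SameRay ℝ v w) (hv : f v = 1)
    (hw : f w = 1) : v = w := by
  obtain ⟨u, α, β, hα, hβ, -, rfl, rfl⟩ := h.exists_eq_smul
  rw [hf α hα] at hv
  rw [hf β hβ, ← hv] at hw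
  rw [mul_right_cancel₀ (right_ne_zero_of_mul_eq_one hv) hw]

end PosHomogeneous

theorem StrictConvexOffRays.convexOn {f : V → ℝ} (hs : StrictConvexOffRays f)
    (hf : PosHomogeneous f) : ConvexOn ℝ univ f := by
  refine convexOn_iff_forall_pos.2 ⟨convex_univ, fun x _ y _ a b ha hb hab => ?_⟩
  obtain rfl : b = 1 - a := by linarith
  by_cases hxy : SameRay ℝ x y
  · exact (hf.map_add_of_sameRay hxy ha.le hb.le).le
  · exact (hs a ⟨ha, by linarith⟩ x y hxy).le

theorem Real.mem_openSegment_or_of_ne {a b c : ℝ} (hab : a ≠ b) (hac : a ≠ c) (hbc : b ≠ c) :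
    a ∈ openSegment ℝ b c ∨ b ∈ openSegment ℝ a c ∨ c ∈ openSegment ℝ a b := by
  simp only [openSegment_eq_Ioo' hab, openSegment_eq_Ioo' hac, openSegment_eq_Ioo' hbc, mem_Ioo,
    min_lt_iff, lt_max_iff]
  rcases lt_or_gt_of_ne hab with h₁ | h₁ <;> rcases lt_or_gt_of_ne hac with h₂ | h₂ <;>
    rcases lt_or_gt_of_ne hbc with h₃ | h₃ <;> simp [*]

theorem exists_ker_eq_span_singleton {K : Type*} [Field K] {W : Type*} [AddCommGroup W]
    [Module K W] (hW : finrank K W = 2) {s : W} (hs : s ≠ 0) :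
    ∃ ψ : W →ₗ[K] K, LinearMap.ker ψ = K ∙ s := by
  have : Module.Finite K W := Module.finite_of_finrank_eq_succ hW
  have hQ : finrank K (W ⧸ K ∙ s) = 1 := by
    have := (K ∙ s).finrank_quotient_add_finrank
    rw [finrank_span_singleton hs, hW] at this
    omega
  let e := (finBasisOfFinrankEq K _ hQ).equivFun.trans (LinearEquiv.funUnique (Fin 1) K K)
  exact ⟨e.toLinearMap ∘ₗ (K ∙ s).mkQ, by rw [LinearEquiv.ker_comp, Submodule.ker_mkQ]⟩

namespace StrictConvexUnitBall

variable {N : V → ℝ} {s : V}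

theorem map_add_smul_lt_one (hN : StrictConvexUnitBall N) (hs : s ≠ 0) {y : V} {a c : ℝ}
    (ha : 0 < a) (hac : a < c) (hy : N y ≤ 1) (hyc : N (y + c • s) ≤ 1) : N (y + a • s) < 1 := by
  have hc : 0 < c := by linarith
  refine hN hy hyc (by simpa [hc.ne'] using hs) _ ⟨1 - a / c, a / c, ?_, div_pos ha hc, by ring, ?_⟩
  · rw [sub_pos, div_lt_one (by linarith)]
    exact hac
  · rw [smul_add, smul_smul, div_mul_cancel₀ a hc.ne']
    module

theorem eq_of_ker_le {ψ : V →ₗ[ℝ] ℝ} (hN : StrictConvexUnitBall N)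
    (hψ : LinearMap.ker ψ ≤ ℝ ∙ s) {x w : V} (hx : N x = 1) (hxs : N (x - s) = 1)
    (hw : N w ≤ 1) (hws : N (w - s) ≤ 1) (hψw : ψ w = ψ x) : w = x := by
  obtain ⟨d, hd⟩ := Submodule.mem_span_singleton.1 (hψ (by simp [hψw] : w - x ∈ LinearMap.ker ψ))
  obtain rfl : w = x + d • s := by rw [hd]; abel
  by_contra hne
  have hs : s ≠ 0 := by rintro rfl; simp at hne
  rcases lt_or_gt_of_ne (show d ≠ 0 by rintro rfl; simp at hne) with hd | hd
  · -- `x - s` lies strictly between `w - s` and `x`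
    have := hN.map_add_smul_lt_one hs (neg_pos.2 hd) (by linarith : -d < 1 - d) hws
      (by rw [show x + d • s - s + (1 - d) • s = x by module]; exact hx.le)
    rw [show x + d • s - s + -d • s = x - s by module] at this
    linarith
  · -- `x` lies strictly between `x - s` and `w`
    have := hN.map_add_smul_lt_one hs one_pos (by linarith : (1 : ℝ) < 1 + d) hxs.le
      (by rw [show x - s + (1 + d) • s = x + d • s by module]; exact hw)
    rw [show x - s + (1 : ℝ) • s = x by module] at this
    linarith

theorem false_of_mem_openSegment {ψ : V →ₗ[ℝ] ℝ} (hN : StrictConvexUnitBall N)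
    (hψ : LinearMap.ker ψ ≤ ℝ ∙ s) {a b c : V} (ha : N a = 1 ∧ N (a - s) = 1)
    (hb : N b = 1 ∧ N (b - s) = 1) (hc : N c = 1 ∧ N (c - s) = 1) (hac : a ≠ c)
    (hψb : ψ b ∈ openSegment ℝ (ψ a) (ψ c)) : False := by
  obtain ⟨w, hw, hψw⟩ : ψ b ∈ ψ.toAffineMap '' openSegment ℝ a c := by
    rwa [image_openSegment]
  have hws : -s + w ∈ openSegment ℝ (-s + a) (-s + c) := (mem_openSegment_translate ℝ (-s)).2 hw
  simp only [neg_add_eq_sub] at hws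
  have hNw : N w < 1 := hN ha.1.le hc.1.le hac w hw
  have hNws : N (w - s) < 1 := hN ha.2.le hc.2.le (by simpa using hac) _ hws
  have := hN.eq_of_ker_le hψ hb.1 hb.2 hNw.le hNws.le hψw
  subst this
  linarith [hb.1]

theorem false_of_three {ψ : V →ₗ[ℝ] ℝ} (hN : StrictConvexUnitBall N)
    (hψ : LinearMap.ker ψ ≤ ℝ ∙ s) {x y z : V} (hx : N x = 1 ∧ N (x - s) = 1)
    (hy : N y = 1 ∧ N (y - s) = 1) (hz : N z = 1 ∧ N (z - s) = 1) (hxy : x ≠ y) (hxz : x ≠ z)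
    (hyz : y ≠ z) : False := by
  have hψ_inj : ∀ {a b : V}, N a = 1 ∧ N (a - s) = 1 → N b = 1 ∧ N (b - s) = 1 → a ≠ b →
      ψ a ≠ ψ b := fun ha hb hab h =>
    hab (hN.eq_of_ker_le hψ hb.1 hb.2 ha.1.le ha.2.le h)
  rcases Real.mem_openSegment_or_of_ne (hψ_inj hx hy hxy) (hψ_inj hx hz hxz) (hψ_inj hy hz hyz)
    with h | h | h
  · exact hN.false_of_mem_openSegment hψ hy hx hz hyz h
  · exact hN.false_of_mem_openSegment hψ hx hy hz hxz h
  · exact hN.false_of_mem_openSegment hψ hx hz hy hxy h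

theorem pair_eq_of_add_eq (hN : StrictConvexUnitBall N) (heven : ∀ x, N (-x) = N x)
    (hV : finrank ℝ V = 2) {q r q' r' : V} (hq : N q = 1) (hr : N r = 1) (hq' : N q' = 1)
    (hr' : N r' = 1) (hqr : q + r ≠ 0) (h : q' + r' = q + r) :
    ({q', r'} : Set V) = {q, r} := by
  obtain ⟨ψ, hψ⟩ := exists_ker_eq_span_singleton hV hqr
  have mem : ∀ {a b : V}, N a = 1 → N b = 1 → a + b = q + r → N a = 1 ∧ N (a - (q + r)) = 1 :=
    fun ha hb hab => ⟨ha, by rw [← hab, sub_add_cancel_left, heven, hb]⟩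
  have hq'_mem : q' = q ∨ q' = r := by
    by_contra! hne
    rcases eq_or_ne q r with rfl | hqr'
    · have hqr' : q ≠ r' := by
        rintro rfl
        exact hne.1 (add_right_cancel h)
      have hq'r' : q' ≠ r' := by
        rintro rfl
        refine hne.1 (smul_right_injective V (two_ne_zero : (2 : ℝ) ≠ 0) ?_)
        simpa only [two_smul] using h
      exact hN.false_of_three hψ.le (mem hq hr rfl) (mem hq' hr' h)
        (mem hr' hq' (by rw [add_comm, h])) hne.1.symm hqr' hq'r'
    · exact hN.false_of_three hψ.le (mem hq hr rfl) (mem hr hq (add_comm r q))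
        (mem hq' hr' h) hqr' hne.1.symm hne.2.symm
  rcases hq'_mem with rfl | rfl
  · rw [add_left_cancel h]
  · rw [add_comm q] at h
    rw [add_left_cancel h, pair_comm]

end StrictConvexUnitBall

end VectorSpace

section Normed

variable {E : Type*} [NormedAddCommGroup E] [NormedSpace ℝ E]

structure IsGauge (f : E → ℝ) : Prop where
  continuous : Continuous f
  posHomogeneous : PosHomogeneous f
  pos : ∀ v, v ≠ 0 → 0 < f v

theorem PosHomogeneous.image_sphere {f : E → ℝ} (hf : PosHomogeneous f)
    (hpos : ∀ v, v ≠ 0 → 0 < f v) : (fun u => (f u)⁻¹ • u) '' sphere 0 1 = f ⁻¹' {1} := by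
  ext v
  constructor
  · rintro ⟨u, hu, rfl⟩
    exact hf.map_inv_smul_self (hpos u (ne_zero_of_mem_unit_sphere ⟨u, hu⟩))
  · intro (hv : f v = 1)
    have hn : 0 < ‖v‖ := norm_pos_iff.2 (hf.ne_zero_of_map_eq_one hv)
    refine ⟨‖v‖⁻¹ • v, by simp [norm_smul, hn.ne'], ?_⟩
    dsimp only
    rw [hf _ (inv_nonneg.2 hn.le), hv, mul_one, inv_inv, smul_inv_smul₀ hn.ne']

namespace IsGauge

variable {f : E → ℝ}

theorem continuousOn_normalize (hf : IsGauge f) :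
    ContinuousOn (fun u => (f u)⁻¹ • u) (sphere (0 : E) 1) :=
  ((hf.continuous.continuousOn.inv₀ fun u hu =>
    (hf.pos u (ne_zero_of_mem_unit_sphere ⟨u, hu⟩)).ne').smul continuousOn_id)

theorem isCompact_preimage_one [ProperSpace E] (hf : IsGauge f) : IsCompact (f ⁻¹' {1}) :=
  hf.posHomogeneous.image_sphere hf.pos ▸ (isCompact_sphere 0 1).image_of_continuousOn
    hf.continuousOn_normalize

theorem isConnected_preimage_one (hE : 1 < Module.rank ℝ E) (hf : IsGauge f) :
    IsConnected (f ⁻¹' {1}) :=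
  hf.posHomogeneous.image_sphere hf.pos ▸ (isConnected_sphere hE 0 zero_le_one).image _
    hf.continuousOn_normalize

theorem exists_add_add_eq_zero (hE : 1 < Module.rank ℝ E) {N : E → ℝ} (hN : IsGauge N)
    (heven : ∀ x, N (-x) = N x) {p : E} (hp : N p = 1) :
    ∃ q r, N q = 1 ∧ N r = 1 ∧ p + q + r = 0 := by
  have hIVT := (hN.isConnected_preimage_one hE).isPreconnected.intermediate_value
    (show -p ∈ N ⁻¹' {1} from (heven p).trans hp) (show p ∈ N ⁻¹' {1} from hp)
    (f := fun x => N (-p - x))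
    (hN.continuous.comp (continuous_const.sub continuous_id)).continuousOn
  have h1 : (1 : ℝ) ∈ Icc (N (-p - -p)) (N (-p - p)) := by
    rw [sub_neg_eq_add, neg_add_cancel, hN.posHomogeneous.map_zero,
      show -p - p = (2 : ℝ) • -p by module, hN.posHomogeneous 2 zero_le_two, heven, hp]
    norm_num
  obtain ⟨q, hq, hqp⟩ := hIVT h1
  exact ⟨q, -p - q, hq, hqp, by abel⟩

end IsGauge

end Normed

section InnerProduct

variable {E : Type*} [NormedAddCommGroup E] [InnerProductSpace ℝ E] {f : E → ℝ}

section Gradient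

variable [CompleteSpace E] {v : E}

theorem PosHomogeneous.inner_gradient_self (hf : PosHomogeneous f)
    (hd : DifferentiableAt ℝ f v) : ⟪gradient f v, v⟫ = f v := by
  have hray : HasDerivAt (fun t : ℝ => f (t • v)) ⟪gradient f v, v⟫ 1 := by
    have := hd.hasGradientAt.hasFDerivAt.comp_hasDerivAt_of_eq (1 : ℝ)
      ((hasDerivAt_id (1 : ℝ)).smul_const v) (one_smul ℝ v).symm
    simpa [Function.comp_def, toDual_apply_apply] using this
  have hlin : HasDerivAt (fun t : ℝ => f (t • v)) (f v) 1 := by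
    refine ((hasDerivAt_id (1 : ℝ)).mul_const (f v)).congr_of_eventuallyEq ?_ |>.congr_deriv
      (one_mul _)
    filter_upwards [eventually_gt_nhds one_pos] with t ht
    exact hf t ht.le v
  exact hray.unique hlin

theorem ConvexOn.inner_gradient_sub_le (hf : ConvexOn ℝ univ f) (hd : DifferentiableAt ℝ f v)
    (u : E) : ⟪gradient f v, u - v⟫ ≤ f u - f v := by
  have hline : HasDerivAt (f ∘ AffineMap.lineMap (k := ℝ) v u) ⟪gradient f v, u - v⟫ 0 := by
    have := hd.hasGradientAt.hasFDerivAt.comp_hasDerivAt_of_eq (0 : ℝ)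
      (AffineMap.hasDerivAt_lineMap (a := v) (b := u)) (by simp)
    simpa [toDual_apply_apply] using this
  simpa [slope_def_field] using
    (hf.comp_affineMap (AffineMap.lineMap v u)).le_slope_of_hasDerivAt (mem_univ 0) (mem_univ 1)
      one_pos hline

theorem PosHomogeneous.inner_gradient_le (hf : PosHomogeneous f) (hconv : ConvexOn ℝ univ f)
    (hd : DifferentiableAt ℝ f v) (u : E) : ⟪gradient f v, u⟫ ≤ f u := by
  have := hconv.inner_gradient_sub_le hd u
  rw [inner_sub_right, hf.inner_gradient_self hd] at this
  linarith

theorem PosHomogeneous.inner_gradient_lt (hf : PosHomogeneous f) (hs : StrictConvexOffRays f)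
    (hd : DifferentiableAt ℝ f v) {u : E} (hvu : ¬ SameRay ℝ v u) : ⟪gradient f v, u⟫ < f u := by
  have hmid := hs (1 / 2) ⟨by norm_num, by norm_num⟩ v u hvu
  have hle := hf.inner_gradient_le (hs.convexOn hf) hd ((1 / 2 : ℝ) • v + (1 - 1 / 2 : ℝ) • u)
  rw [inner_add_right, real_inner_smul_right, real_inner_smul_right,
    hf.inner_gradient_self hd] at hle
  linarith

theorem PosHomogeneous.injOn_gradient (hf : PosHomogeneous f) (hs : StrictConvexOffRays f)
    (hd : ∀ v, f v = 1 → DifferentiableAt ℝ f v) : InjOn (gradient f) (f ⁻¹' {1}) := by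
  intro v (hv : f v = 1) w (hw : f w = 1) hvw
  by_contra hne
  have hray : ¬ SameRay ℝ v w := fun h => hne (hf.eq_of_sameRay h hv hw)
  have := hf.inner_gradient_lt hs (hd v hv) hray
  rw [hvw, hf.inner_gradient_self (hd w hw)] at this
  exact lt_irrefl _ this

end Gradient

noncomputable def supportFun (S : Set E) (x : E) : ℝ :=
  sSup ((fun u => ⟪x, u⟫) '' S)

section SupportFun

variable {S : Set E} {x : E}

theorem inner_le_supportFun (hS : IsCompact S) {u : E} (hu : u ∈ S) : ⟪x, u⟫ ≤ supportFun S x :=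
  le_csSup (hS.bddAbove_image (continuous_const.inner continuous_id).continuousOn)
    (mem_image_of_mem _ hu)

theorem exists_inner_eq_supportFun (hS : IsCompact S) (hne : S.Nonempty) (x : E) :
    ∃ u ∈ S, ⟪x, u⟫ = supportFun S x :=
  (hS.image (continuous_const.inner continuous_id)).sSup_mem (hne.image _)

theorem nonempty_of_supportFun_ne_zero (h : supportFun S x ≠ 0) : S.Nonempty := by
  by_contra hS
  simp [supportFun, not_nonempty_iff_eq_empty.1 hS] at h

theorem supportFun_le_of_forall_le {a : ℝ} (ha : 0 ≤ a) (h : ∀ u ∈ S, ⟪x, u⟫ ≤ a) :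
    supportFun S x ≤ a :=
  Real.sSup_le (forall_mem_image.2 h) ha

theorem posHomogeneous_supportFun (S : Set E) : PosHomogeneous (supportFun S) := by
  intro c hc x
  have : (fun u => ⟪c • x, u⟫) '' S = c • ((fun u => ⟪x, u⟫) '' S) := by
    simp only [real_inner_smul_left, ← smul_eq_mul, ← image_smul, image_image]
  rw [supportFun, this, Real.sSup_smul_of_nonneg hc, smul_eq_mul, supportFun]

theorem supportFun_neg (hS : ∀ u ∈ S, -u ∈ S) (x : E) : supportFun S (-x) = supportFun S x := by
  have : (fun u => ⟪-x, u⟫) '' S = (fun u => ⟪x, u⟫) '' S := by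
    ext a
    constructor <;> rintro ⟨u, hu, rfl⟩ <;> exact ⟨-u, hS u hu, by simp⟩
  rw [supportFun, this, supportFun]

end SupportFun

namespace IsGauge

variable [ProperSpace E] {x : E}

theorem forall_inner_le_iff (hf : IsGauge f) :
    (∀ u, ⟪x, u⟫ ≤ f u) ↔ supportFun (f ⁻¹' {1}) x ≤ 1 := by
  refine ⟨fun h => supportFun_le_of_forall_le zero_le_one fun u (hu : f u = 1) => hu ▸ h u,
    fun h u => ?_⟩
  rcases eq_or_ne u 0 with rfl | hu
  · simp [hf.posHomogeneous.map_zero]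
  have hfu := hf.pos u hu
  have := (inner_le_supportFun hf.isCompact_preimage_one
    (hf.posHomogeneous.map_inv_smul_self hfu)).trans h
  rwa [real_inner_smul_right, inv_mul_le_iff₀ hfu, mul_one] at this

theorem supportFun_pos (hf : IsGauge f) (hx : x ≠ 0) : 0 < supportFun (f ⁻¹' {1}) x := by
  have hfx := hf.pos x hx
  refine lt_of_lt_of_le ?_ (inner_le_supportFun hf.isCompact_preimage_one
    (hf.posHomogeneous.map_inv_smul_self hfx))
  rw [real_inner_smul_right, real_inner_self_eq_norm_sq]
  have := norm_pos_iff.2 hx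
  positivity

theorem isGauge_supportFun (hf : IsGauge f) : IsGauge (supportFun (f ⁻¹' {1})) where
  continuous := hf.isCompact_preimage_one.continuous_sSup (by fun_prop)
  posHomogeneous := posHomogeneous_supportFun _
  pos _ := hf.supportFun_pos

variable {w : E}

theorem gradient_eq_of_supportFun_le_one (hf : IsGauge f) (hd : DifferentiableAt ℝ f w)
    (hx : supportFun (f ⁻¹' {1}) x ≤ 1) (hw : f w = 1) (hxw : ⟪x, w⟫ = 1) : gradient f w = x := by
  have hmin : IsLocalMin (fun u => f u - ⟪x, u⟫) w :=
    Eventually.of_forall fun u => by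
      have := (hf.forall_inner_le_iff.2 hx) u
      simp only [hw, hxw, sub_self]
      linarith
  have h0 := hmin.hasFDerivAt_eq_zero (hd.hasFDerivAt.sub (toDual ℝ E x).hasFDerivAt)
  rw [gradient, sub_eq_zero.1 h0, LinearIsometryEquiv.symm_apply_apply]

theorem supportFun_gradient (hf : IsGauge f) (hconv : ConvexOn ℝ univ f)
    (hd : DifferentiableAt ℝ f w) (hw : f w = 1) : supportFun (f ⁻¹' {1}) (gradient f w) = 1 := by
  refine le_antisymm (hf.forall_inner_le_iff.1 (hf.posHomogeneous.inner_gradient_le hconv hd)) ?_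
  calc 1 = ⟪gradient f w, w⟫ := by rw [hf.posHomogeneous.inner_gradient_self hd, hw]
    _ ≤ _ := inner_le_supportFun hf.isCompact_preimage_one hw

theorem exists_gradient_eq (hf : IsGauge f) (hd : ∀ w, f w = 1 → DifferentiableAt ℝ f w)
    (hx : supportFun (f ⁻¹' {1}) x = 1) : ∃ w, f w = 1 ∧ gradient f w = x := by
  obtain ⟨w, hw, hxw⟩ := exists_inner_eq_supportFun hf.isCompact_preimage_one
    (nonempty_of_supportFun_ne_zero (hx ▸ one_ne_zero)) x
  exact ⟨w, hw, hf.gradient_eq_of_supportFun_le_one (hd w hw) hx.le hw (hxw.trans hx)⟩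

theorem strictConvexUnitBall_supportFun (hf : IsGauge f)
    (hd : ∀ w, f w = 1 → DifferentiableAt ℝ f w) :
    StrictConvexUnitBall (supportFun (f ⁻¹' {1})) := by
  intro a b ha hb hab z hz
  by_contra! hz1
  obtain ⟨α, β, hα, hβ, hαβ, rfl⟩ := hz
  obtain ⟨w, hw : f w = 1, hzw⟩ := exists_inner_eq_supportFun hf.isCompact_preimage_one
    (nonempty_of_supportFun_ne_zero (by linarith)) (α • a + β • b)
  have haw := hf.forall_inner_le_iff.2 ha w
  have hbw := hf.forall_inner_le_iff.2 hb w
  rw [inner_add_left, real_inner_smul_left, real_inner_smul_left] at hzw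
  have haw1 : ⟪a, w⟫ = 1 := by nlinarith
  have hbw1 : ⟪b, w⟫ = 1 := by nlinarith
  exact hab ((hf.gradient_eq_of_supportFun_le_one (hd w hw) ha hw haw1).symm.trans
    (hf.gradient_eq_of_supportFun_le_one (hd w hw) hb hw hbw1))

end IsGauge

end InnerProduct

/-- Let `𝔥 : ℝ² → ℝ` be continuous, positively 1-homogeneous,
symmetric, positive away from `0`, `C¹` on `ℝ² \ {0}`, and strictly convex. Then for
every point `A` with `𝔥 A = 1` there is exactly one unordered pair `{B, C}` of points of
the unit sphere such that `∇𝔥 A + ∇𝔥 B + ∇𝔥 C = 0`. -/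
theorem statement_6 (𝔥 : EuclideanSpace ℝ (Fin 2) → ℝ)
    (h_cont : Continuous 𝔥)
    (h_homog : ∀ c : ℝ, 0 ≤ c → ∀ v, 𝔥 (c • v) = c * 𝔥 v)
    (h_symm : ∀ v : EuclideanSpace ℝ (Fin 2), 𝔥 (-v) = 𝔥 v)
    (h_pos : ∀ v : EuclideanSpace ℝ (Fin 2), v ≠ 0 → 0 < 𝔥 v)
    (h_C1 : ContDiffOn ℝ 1 𝔥 {(0 : EuclideanSpace ℝ (Fin 2))}ᶜ)
    (h_strict : ∀ t ∈ Set.Ioo (0:ℝ) 1, ∀ ν μ : EuclideanSpace ℝ (Fin 2),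
      ¬ ((∃ l : ℝ, 0 ≤ l ∧ ν = l • μ) ∨ (∃ l : ℝ, 0 ≤ l ∧ μ = l • ν)) →
      𝔥 (t • ν + (1 - t) • μ) < t * 𝔥 ν + (1 - t) * 𝔥 μ)
    (A : EuclideanSpace ℝ (Fin 2)) (hA : 𝔥 A = 1) :
    ∃ B C : EuclideanSpace ℝ (Fin 2),
      𝔥 B = 1 ∧ 𝔥 C = 1 ∧
      gradient 𝔥 A + gradient 𝔥 B + gradient 𝔥 C = 0 ∧
      ∀ B' C' : EuclideanSpace ℝ (Fin 2), 𝔥 B' = 1 → 𝔥 C' = 1 →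
        gradient 𝔥 A + gradient 𝔥 B' + gradient 𝔥 C' = 0 →
        ({B', C'} : Set (EuclideanSpace ℝ (Fin 2))) = {B, C} := by
  have hf : IsGauge 𝔥 := ⟨h_cont, h_homog, h_pos⟩
  have hs : StrictConvexOffRays 𝔥 := fun t ht ν μ h =>
    h_strict t ht ν μ (mt sameRay_iff_exists_nonneg_smul.2 h)
  have hd : ∀ v, 𝔥 v = 1 → DifferentiableAt ℝ 𝔥 v := fun v hv =>
    (h_C1.differentiableOn one_ne_zero).differentiableAt
      (isOpen_compl_singleton.mem_nhds (hf.posHomogeneous.ne_zero_of_map_eq_one hv))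
  set N := supportFun (𝔥 ⁻¹' {1})
  have hN : IsGauge N := hf.isGauge_supportFun
  have heven : ∀ x, N (-x) = N x := supportFun_neg fun u (hu : 𝔥 u = 1) => (h_symm u).trans hu
  have hgrad : ∀ v, 𝔥 v = 1 → N (gradient 𝔥 v) = 1 := fun v hv =>
    hf.supportFun_gradient (hs.convexOn h_homog) (hd v hv) hv
  obtain ⟨q, r, hq, hr, hqr⟩ :=
    hN.exists_add_add_eq_zero (one_lt_rank_of_one_lt_finrank (by simp)) heven (hgrad A hA)
  obtain ⟨B, hB, rfl⟩ := hf.exists_gradient_eq hd hq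
  obtain ⟨C, hC, rfl⟩ := hf.exists_gradient_eq hd hr
  refine ⟨B, C, hB, hC, hqr, fun B' C' hB' hC' h' => ?_⟩
  have hBC : gradient 𝔥 B + gradient 𝔥 C ≠ 0 := fun h => by
    rw [add_assoc, h, add_zero] at hqr
    simpa [hqr, hN.posHomogeneous.map_zero] using hgrad A hA
  have hsum : gradient 𝔥 B' + gradient 𝔥 C' = gradient 𝔥 B + gradient 𝔥 C :=
    add_left_cancel (a := gradient 𝔥 A) (by rw [← add_assoc, ← add_assoc, h', hqr])
  have := (hf.strictConvexUnitBall_supportFun hd).pair_eq_of_add_eq heven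
    finrank_euclideanSpace_fin (hgrad B hB) (hgrad C hC) (hgrad B' hB') (hgrad C' hC') hBC hsum
  rwa [← image_pair, ← image_pair, (hf.posHomogeneous.injOn_gradient hs hd).image_eq_image_iff
    (pair_subset hB' hC') (pair_subset hB hC)] at this
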